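/- Bounds on the optimal dual variable of the equality constraint: suppose ∫_Ω F₀(0, β) dβ = 0 and ∫_Ω F(0, β) dβ = 0, and let α > 0 be such that gᵢ(α𝟙) and gᵢ(−α𝟙) are finite for all i, where 𝟙 ∈ ℝᵖ is the all-ones vector. Then every (μ, ν) ∈ ℂᵖ × ℝ₊ᵐ with d(μ, ν) ≥ 0 satisfies − ( Σᵢ νᵢ gᵢ(−α𝟙) ) / α ≤ Re(μ)ᵀ𝟙 ≤ ( Σᵢ νᵢ gᵢ(α𝟙) ) / α. -/
import Mathlib


open MeasureTheory

noncomputable section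

/-- The Lebesgue measure restricted to `Ω ⊆ ℝⁿ`. -/
def mOmega {n : ℕ} (Ω : Set (Fin n → ℝ)) : Measure (Fin n → ℝ) :=
  volume.restrict Ω

/-- The "L0-norm": the (restricted Lebesgue) measure of the support of `X`. -/
def L0norm {n : ℕ} (Ω : Set (Fin n → ℝ)) (X : (Fin n → ℝ) → ℂ) : ℝ :=
  (mOmega Ω {β | X β ≠ 0}).toReal

/-- `Re[μᴴ x]` for vectors `μ, x ∈ ℂᵖ`. -/
def reInner {p : ℕ} (μ x : Fin p → ℂ) : ℝ :=
  (∑ i, (starRingEnd ℂ) (μ i) * x i).re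

/-- A function `X : Ω → ℂ` is admissible if it is measurable and takes values
in `P` almost everywhere on `Ω`. -/
def Admissible {n : ℕ} (Ω : Set (Fin n → ℝ)) (P : Set ℂ) (X : (Fin n → ℝ) → ℂ) : Prop :=
  Measurable X ∧ ∀ᵐ β ∂(mOmega Ω), X β ∈ P

/-- The Lagrangian of the sparse functional program. -/
def Lagrangian {n p m : ℕ} (Ω : Set (Fin n → ℝ)) (F₀ : ℂ → (Fin n → ℝ) → ℝ)
    (F : ℂ → (Fin n → ℝ) → Fin p → ℂ) (g : Fin m → (Fin p → ℂ) → ℝ) (lam : ℝ)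
    (X : (Fin n → ℝ) → ℂ) (z : Fin p → ℂ) (μ : Fin p → ℂ) (ν : Fin m → ℝ) : ℝ :=
  (∫ β, F₀ (X β) β ∂(mOmega Ω)) + lam * L0norm Ω X
    + reInner μ ((∫ β, F (X β) β ∂(mOmega Ω)) - z)
    + ∑ i, ν i * g i z

/-- The (extended-real valued) dual function. -/
def dualFn {n p m : ℕ} (Ω : Set (Fin n → ℝ)) (F₀ : ℂ → (Fin n → ℝ) → ℝ)
    (F : ℂ → (Fin n → ℝ) → Fin p → ℂ) (g : Fin m → (Fin p → ℂ) → ℝ) (lam : ℝ)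
    (P : Set ℂ) (μ : Fin p → ℂ) (ν : Fin m → ℝ) : EReal :=
  sInf ((fun Xz : ((Fin n → ℝ) → ℂ) × (Fin p → ℂ) =>
      ((Lagrangian Ω F₀ F g lam Xz.1 Xz.2 μ ν : ℝ) : EReal)) ''
    {Xz | Admissible Ω P Xz.1})

/-- **Bounds on the dual variable of the equality constraint.**  If
`∫_Ω F₀(0, β) dβ = 0` and `∫_Ω F(0, β) dβ = 0`, then for any `α > 0`, every
`(μ, ν) ∈ ℂᵖ × ℝ₊ᵐ` with `d(μ, ν) ≥ 0` satisfies
`−(Σᵢ νᵢ gᵢ(−α𝟙))/α ≤ Re(μ)ᵀ𝟙 ≤ (Σᵢ νᵢ gᵢ(α𝟙))/α`. -/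
theorem dual_mu_bound
    {n p m : ℕ} (Ω : Set (Fin n → ℝ)) (hΩ : IsCompact Ω)
    (F₀ : ℂ → (Fin n → ℝ) → ℝ) (F : ℂ → (Fin n → ℝ) → Fin p → ℂ)
    (g : Fin m → (Fin p → ℂ) → ℝ) (hg : ∀ i, ConvexOn ℝ Set.univ (g i))
    (lam : ℝ) (hlam : 0 < lam) (P : Set ℂ) (hP0 : (0 : ℂ) ∈ P)
    (hintF₀ : ∀ X, Admissible Ω P X → Integrable (fun β => F₀ (X β) β) (mOmega Ω))
    (hintF : ∀ X, Admissible Ω P X → Integrable (fun β => F (X β) β) (mOmega Ω))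
    (hF₀zero : (∫ β, F₀ 0 β ∂(mOmega Ω)) = 0)
    (hFzero : (∫ β, F 0 β ∂(mOmega Ω)) = 0)
    (α : ℝ) (hα : 0 < α)
    (μv : Fin p → ℂ) (ν : Fin m → ℝ) (hν : ∀ i, 0 ≤ ν i)
    (hd : (0 : EReal) ≤ dualFn Ω F₀ F g lam P μv ν) :
    -(∑ i, ν i * g i (fun _ => (-α : ℂ))) / α ≤ ∑ i, (μv i).re ∧
      ∑ i, (μv i).re ≤ (∑ i, ν i * g i (fun _ => (α : ℂ))) / α := by
  have hadm : Admissible Ω P (fun _ => (0:ℂ)) :=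
    ⟨measurable_const, Filter.Eventually.of_forall fun _ => hP0⟩
  have hL0 : L0norm Ω (fun _ => (0:ℂ)) = 0 := by
    simp [L0norm]
  have key : ∀ z : Fin p → ℂ,
      (0:ℝ) ≤ -reInner μv z + ∑ i, ν i * g i z := by
    intro z
    have h1 : dualFn Ω F₀ F g lam P μv ν ≤
        ((Lagrangian Ω F₀ F g lam (fun _ => 0) z μv ν : ℝ) : EReal) :=
      sInf_le ⟨((fun _ => 0), z), hadm, rfl⟩
    have h2 : (0:ℝ) ≤ Lagrangian Ω F₀ F g lam (fun _ => 0) z μv ν := by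
      exact_mod_cast le_trans hd h1
    have h3 : Lagrangian Ω F₀ F g lam (fun _ => 0) z μv ν
        = -reInner μv z + ∑ i, ν i * g i z := by
      have hrez : reInner μv (0 - z) = -reInner μv z := by
        simp [reInner, mul_sub, Finset.sum_sub_distrib]
      simp only [Lagrangian, hL0, hF₀zero, hFzero, hrez, mul_zero]
      ring
    linarith [h3 ▸ h2]
  have hre : ∀ c : ℝ, reInner μv (fun _ => (c:ℂ)) = c * ∑ i, (μv i).re := by
    intro c
    simp [reInner, Complex.mul_re, Finset.sum_mul, Finset.mul_sum, mul_comm]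
  have k1 := key (fun _ => (α:ℂ))
  have k2 := key (fun _ => (-α:ℂ))
  rw [hre] at k1
  have hneg : reInner μv (fun _ => ((-α : ℝ):ℂ)) = (-α) * ∑ i, (μv i).re := hre (-α)
  simp only [Complex.ofReal_neg] at hneg
  rw [hneg] at k2
  constructor
  · rw [neg_div, neg_le, le_div_iff₀ hα]
    nlinarith
  · rw [le_div_iff₀ hα]
    nlinarith
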